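/- Let f : ℝ^d → ℝ be Lipschitz with constant L and let J be a self-adjoint operator (commuting family J¹,…,J^d of self-adjoint operators with joint spectral measure). For any unit vector ψ in the relevant domain and any c ∈ ℝ^d, |⟨ψ, f(J)ψ⟩ − f(c)| ≤ L (∑_{i=1}^d ‖(J^i − c^i)ψ‖²)^{1/2}. -/

import Mathlib

open MeasureTheory

/-- **Variance-to-expectation estimate for vector observables (joint functional calculus).**
Let `J¹,…,J^d` be a commuting family of self-adjoint operators with joint spectral measure
`ν` for the unit vector `ψ` (so `⟨ψ, f(J)ψ⟩ = ∫ f dν` and `‖(Jⁱ − cⁱ)ψ‖² = ∫ (sⁱ − cⁱ)² dν`).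
Then for `f` Lipschitz with constant `L`,
`|⟨ψ, f(J)ψ⟩ − f(c)| ≤ L (∑ᵢ ‖(Jⁱ − cⁱ)ψ‖²)^{1/2}`. -/
theorem stmt9 {H : Type*} [NormedAddCommGroup H] [InnerProductSpace ℂ H]
    (d : ℕ) (J : Fin d → H →L[ℂ] H) (T : H →L[ℂ] H)  -- `T` plays the role of `f(J)`
    (ψ : H) (hψ : ‖ψ‖ = 1)
    (ν : Measure (EuclideanSpace ℝ (Fin d))) [IsProbabilityMeasure ν]
    (f : EuclideanSpace ℝ (Fin d) → ℝ) (L : NNReal) (hf : LipschitzWith L f)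
    (hfint : Integrable f ν)
    (c : EuclideanSpace ℝ (Fin d))
    (hT : (inner ℂ ψ (T ψ) : ℂ) = ((∫ s, f s ∂ν : ℝ) : ℂ))
    (hJ : ∀ i, ‖J i ψ - ((c i : ℝ) : ℂ) • ψ‖ ^ 2 = ∫ s, (s i - c i) ^ 2 ∂ν)
    (hint : ∀ i, Integrable (fun s => (s i - c i) ^ 2) ν) :
    ‖(inner ℂ ψ (T ψ) : ℂ) - ((f c : ℝ) : ℂ)‖ ≤
      (L : ℝ) * Real.sqrt (∑ i, ‖J i ψ - ((c i : ℝ) : ℂ) • ψ‖ ^ 2) := by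
  classical
  set g : EuclideanSpace ℝ (Fin d) → ℝ := fun s => ‖s - c‖ with hg_def
  have hgmeas : AEStronglyMeasurable g ν :=
    ((continuous_id.sub continuous_const).norm).aestronglyMeasurable
  have hgsq : ∀ s, g s ^ 2 = ∑ i, (s i - c i) ^ 2 := by
    intro s
    rw [hg_def]
    simp only [EuclideanSpace.norm_eq]
    rw [Real.sq_sqrt (Finset.sum_nonneg fun i _ => sq_nonneg _)]
    congr 1
    ext i
    simp [Real.norm_eq_abs, sq_abs]
  have hg2int : Integrable (fun s => g s ^ 2) ν := by
    have h : Integrable (fun s => ∑ i, (s i - c i) ^ 2) ν :=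
      integrable_finset_sum _ fun i _ => hint i
    exact h.congr (by filter_upwards with s using (hgsq s).symm)
  have hgL2 : MemLp g 2 ν := (memLp_two_iff_integrable_sq hgmeas).mpr hg2int
  have hgint : Integrable g ν := hgL2.integrable (by norm_num)
  have hvar : (∫ s, g s ∂ν) ^ 2 ≤ ∫ s, g s ^ 2 ∂ν := by
    have h0 := ProbabilityTheory.variance_nonneg g ν
    rw [ProbabilityTheory.variance_eq_sub hgL2] at h0
    have : (∫ s, (g ^ 2) s ∂ν) = ∫ s, g s ^ 2 ∂ν := by
      simp [Pi.pow_apply]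
    rw [this] at h0
    linarith
  have hsqrt : ∫ s, g s ∂ν ≤ Real.sqrt (∫ s, g s ^ 2 ∂ν) :=
    Real.le_sqrt_of_sq_le hvar
  -- rewrite the RHS sum
  have hsum : (∑ i, ‖J i ψ - ((c i : ℝ) : ℂ) • ψ‖ ^ 2) = ∫ s, g s ^ 2 ∂ν := by
    rw [Finset.sum_congr rfl fun i _ => hJ i,
      ← integral_finset_sum _ fun i _ => hint i]
    exact integral_congr_ae (by filter_upwards with s using (hgsq s).symm)
  rw [hsum, hT, ← Complex.ofReal_sub, Complex.norm_real]
  have hconst : Integrable (fun _ : EuclideanSpace ℝ (Fin d) => f c) ν :=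
    integrable_const _
  have hsub : (∫ s, f s ∂ν) - f c = ∫ s, (f s - f c) ∂ν := by
    rw [integral_sub hfint hconst, integral_const]
    simp
  rw [hsub]
  calc ‖∫ s, (f s - f c) ∂ν‖ ≤ ∫ s, ‖f s - f c‖ ∂ν := norm_integral_le_integral_norm _
    _ ≤ ∫ s, (L : ℝ) * g s ∂ν := by
        apply integral_mono (hfint.sub hconst).norm (hgint.const_mul _)
        intro s
        have := hf.dist_le_mul s c
        rw [Real.dist_eq, dist_eq_norm] at this
        simpa [hg_def, Real.norm_eq_abs] using this
    _ = (L : ℝ) * ∫ s, g s ∂ν := integral_const_mul _ _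
    _ ≤ (L : ℝ) * Real.sqrt (∫ s, g s ^ 2 ∂ν) := by
        exact mul_le_mul_of_nonneg_left hsqrt (NNReal.coe_nonneg L)
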